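/- arXiv:2208.06785 — 3 statements merged into one kernel-verified Lean document; each statement's English description precedes it below -/
import Mathlib

section
/- Let σ be a strategy. Then the coordinate process X = (X_1, X_2, ...) is conditionally identically distributed (c.i.d.) under P_σ if and only if for every n ≥ 0 and every A ∈ B one has σ_n(x, A) = ∫_S σ_{n+1}((x, y), A) σ_n(x, dy) for P_σ-almost all x ∈ S^n (for n = 0 this reads σ_0(A) = ∫_S σ_1(y, A) σ_0(dy)). -/
open MeasureTheory ProbabilityTheory

namespace PredictiveBayes

variable {S : Type*} [MeasurableSpace S]

/-- The finite-dimensional distributions determined by a strategy `κ`: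
`stratFDD κ n` is the law of `(X_1, …, X_n)` under `P_κ`, built by Ionescu–Tulcea
composition of the predictive kernels. -/
noncomputable def stratFDD (κ : ∀ n, Kernel (Fin n → S) S) : ∀ n, Measure (Fin n → S)
  | 0 => Measure.dirac (fun i : Fin 0 => i.elim0)
  | n + 1 => (stratFDD κ n).bind (fun x => ((κ n) x).map (Fin.snoc x))

/-- `P` is the Ionescu–Tulcea law `P_κ` of the strategy `κ`: its finite-dimensional
distributions are the ones obtained by composing the predictive kernels. -/
def IsStrategyLaw (κ : ∀ n, Kernel (Fin n → S) S) (P : Measure (ℕ → S)) : Prop :=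
  ∀ n, P.map (fun ω (i : Fin n) => ω i) = stratFDD κ n

/-- The process `Y` is conditionally identically distributed (c.i.d.) under `P`:
`Y 1 ∼ Y 0` and, for every `n ≥ 1` and `m ≥ n` (0-based indices, so that in 1-based
notation `Y_k` with `k > n` is compared with `Y_{n+1}` given `Y_1, …, Y_n`), the
conditional distributions of `Y m` and `Y n` given `(Y 0, …, Y (n-1))` coincide. -/
def CID {Ω : Type*} [MeasurableSpace Ω] (P : Measure Ω) (Y : ℕ → Ω → S) : Prop :=
  P.map (Y 1) = P.map (Y 0) ∧
  ∀ n m : ℕ, 1 ≤ n → n ≤ m → ∀ A : Set S, MeasurableSet A →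
    (P[Set.indicator ((Y m) ⁻¹' A) (fun _ => (1 : ℝ)) |
        MeasurableSpace.comap (fun ω (i : Fin n) => Y i ω) inferInstance])
      =ᵐ[P]
    (P[Set.indicator ((Y n) ⁻¹' A) (fun _ => (1 : ℝ)) |
        MeasurableSpace.comap (fun ω (i : Fin n) => Y i ω) inferInstance])

/-! The `d`-step predictive kernel `predKernel κ d n`, obtained by composing
`κ n, …, κ (n + d)`, is a version of the conditional law of `X_{n+d}` given
`(X_0, …, X_{n-1})` (coordinates are 0-based). Hence the process is c.i.d. iff
`predKernel κ d n = κ n` almost everywhere for every `d`. The condition of the theorem is the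
case `d = 1`, and since `predKernel κ (d + 1) n x = ∫ predKernel κ d (n + 1) (x, y) κ_n(x, dy)`,
it propagates to every `d` by induction. -/

open scoped ENNReal

lemma condExp_indicator_preimage_ae_eq_kernel {Ω β γ : Type*} [MeasurableSpace Ω]
    [MeasurableSpace β] [MeasurableSpace γ] {P : Measure Ω} [IsFiniteMeasure P] {X : Ω → β}
    (hX : Measurable X) {Y : Ω → γ} (hY : Measurable Y) (η : Kernel β γ) [IsFiniteKernel η]
    {A : Set γ} (hA : MeasurableSet A)
    (h : ∀ t, MeasurableSet t → P (X ⁻¹' t ∩ Y ⁻¹' A) = ∫⁻ x in t, η x A ∂(P.map X)) :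
    P[(Y ⁻¹' A).indicator (fun _ => (1 : ℝ)) | MeasurableSpace.comap X inferInstance]
      =ᵐ[P] fun ω => (η (X ω) A).toReal := by
  have hg : Measurable fun x => (η x A).toReal := (η.measurable_coe hA).ennreal_toReal
  have hgX : Integrable (fun ω => (η (X ω) A).toReal) P := by
    refine .of_bound (hg.comp hX).aestronglyMeasurable η.bound.toReal (.of_forall fun ω => ?_)
    rw [Real.norm_eq_abs, abs_of_nonneg ENNReal.toReal_nonneg]
    exact ENNReal.toReal_mono η.bound_ne_top (η.measure_le_bound _ _)
  refine (ae_eq_condExp_of_forall_setIntegral_eq hX.comap_le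
    ((integrable_const 1).indicator (hY hA)) (fun _ _ _ => hgX.integrableOn) ?_
    (hg.comp (comap_measurable X)).aestronglyMeasurable).symm
  rintro _ ⟨t, ht, rfl⟩ -
  rw [setIntegral_indicator (hY hA), setIntegral_const, ← setIntegral_map ht
    hg.aestronglyMeasurable hX.aemeasurable, integral_toReal (η.measurable_coe hA).aemeasurable
    (.of_forall fun _ => measure_lt_top _ _), ← h t ht]
  simp [measureReal_def]

lemma measurable_snoc (n : ℕ) :
    Measurable fun p : (Fin n → S) × S => (Fin.snoc p.1 p.2 : Fin (n + 1) → S) := by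
  refine measurable_pi_lambda _ fun i => ?_
  induction i using Fin.lastCases with
  | last => simpa using measurable_snd
  | cast j =>
    simp only [Fin.snoc_castSucc]
    exact (measurable_pi_apply j).comp measurable_fst

lemma measurable_snoc_left {n : ℕ} (x : Fin n → S) :
    Measurable fun y : S => (Fin.snoc x y : Fin (n + 1) → S) :=
  (measurable_snoc n).comp measurable_prodMk_left

lemma measurable_init (n : ℕ) : Measurable (Fin.init : (Fin (n + 1) → S) → Fin n → S) :=
  measurable_pi_lambda _ fun _ => measurable_pi_apply _

lemma measurable_proj (n : ℕ) : Measurable fun (ω : ℕ → S) (i : Fin n) => ω i :=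
  measurable_pi_lambda _ fun _ => measurable_pi_apply _

noncomputable def snocKernel {n : ℕ} (η : Kernel (Fin n → S) S) [IsSFiniteKernel η] :
    Kernel (Fin n → S) (Fin (n + 1) → S) :=
  (Kernel.id ×ₖ η).map fun p => Fin.snoc p.1 p.2

lemma snocKernel_apply {n : ℕ} (η : Kernel (Fin n → S) S) [IsSFiniteKernel η] (x : Fin n → S) :
    snocKernel η x = (η x).map (Fin.snoc x) := by
  rw [snocKernel, Kernel.map_apply _ (measurable_snoc n), Kernel.prod_apply, Kernel.id_apply,
    Measure.dirac_prod, Measure.map_map (measurable_snoc n) measurable_prodMk_left]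
  rfl

instance {n : ℕ} (η : Kernel (Fin n → S) S) [IsMarkovKernel η] : IsMarkovKernel (snocKernel η) :=
  Kernel.IsMarkovKernel.map _ (measurable_snoc n)

section Strategy

variable (κ : ∀ n, Kernel (Fin n → S) S) [∀ n, IsMarkovKernel (κ n)]

lemma stratFDD_succ (n : ℕ) : stratFDD κ (n + 1) = snocKernel (κ n) ∘ₘ stratFDD κ n := by
  rw [stratFDD]
  congr
  exact funext fun x => (snocKernel_apply (κ n) x).symm

noncomputable def predKernel : ℕ → ∀ n : ℕ, Kernel (Fin n → S) S
  | 0, n => κ n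
  | d + 1, n => predKernel d (n + 1) ∘ₖ snocKernel (κ n)

instance isMarkovKernel_predKernel : ∀ d n, IsMarkovKernel (predKernel κ d n)
  | 0, n => inferInstanceAs (IsMarkovKernel (κ n))
  | d + 1, n =>
    have := isMarkovKernel_predKernel d (n + 1)
    inferInstanceAs (IsMarkovKernel (predKernel κ d (n + 1) ∘ₖ snocKernel (κ n)))

lemma predKernel_succ_apply (d n : ℕ) (x : Fin n → S) {A : Set S} (hA : MeasurableSet A) :
    predKernel κ (d + 1) n x A = ∫⁻ y, predKernel κ d (n + 1) (Fin.snoc x y) A ∂(κ n x) := by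
  rw [predKernel, Kernel.comp_apply' _ _ _ hA, snocKernel_apply,
    lintegral_map (Kernel.measurable_coe _ hA) (measurable_snoc_left x)]

variable {κ} {P : Measure (ℕ → S)}

lemma lintegral_map_proj_succ (hP : IsStrategyLaw κ P) (n : ℕ)
    {f : (Fin (n + 1) → S) → ℝ≥0∞} (hf : Measurable f) :
    ∫⁻ z, f z ∂(P.map fun ω (i : Fin (n + 1)) => ω i)
      = ∫⁻ x, ∫⁻ y, f (Fin.snoc x y) ∂(κ n x) ∂(P.map fun ω (i : Fin n) => ω i) := by
  rw [hP, hP, stratFDD_succ, Measure.lintegral_bind (snocKernel (κ n)).aemeasurable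
    hf.aemeasurable]
  refine lintegral_congr fun x => ?_
  rw [snocKernel_apply, lintegral_map hf (measurable_snoc_left x)]

lemma ae_ae_of_ae_map_proj_succ (hP : IsStrategyLaw κ P) (n : ℕ)
    {p : (Fin (n + 1) → S) → Prop} (h : ∀ᵐ z ∂(P.map fun ω (i : Fin (n + 1)) => ω i), p z) :
    ∀ᵐ x ∂(P.map fun ω (i : Fin n) => ω i), ∀ᵐ y ∂(κ n x), p (Fin.snoc x y) := by
  rw [hP, stratFDD_succ] at h
  rw [hP]
  filter_upwards [Measure.ae_ae_of_ae_comp h] with x hx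
  rw [snocKernel_apply] at hx
  exact ae_of_ae_map (measurable_snoc_left x).aemeasurable hx

lemma setLIntegral_init_preimage (hP : IsStrategyLaw κ P) (n : ℕ) {t : Set (Fin n → S)}
    (ht : MeasurableSet t) {f : (Fin (n + 1) → S) → ℝ≥0∞} (hf : Measurable f) :
    ∫⁻ z in Fin.init ⁻¹' t, f z ∂(P.map fun ω (i : Fin (n + 1)) => ω i)
      = ∫⁻ x in t, ∫⁻ y, f (Fin.snoc x y) ∂(κ n x) ∂(P.map fun ω (i : Fin n) => ω i) := by
  rw [← lintegral_indicator (measurable_init n ht),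
    lintegral_map_proj_succ hP n (hf.indicator (measurable_init n ht)), ← lintegral_indicator ht]
  refine lintegral_congr fun x => ?_
  by_cases hx : x ∈ t <;> simp [Set.indicator, hx, Fin.init_snoc]

lemma measure_proj_inter_coord (hP : IsStrategyLaw κ P) (d n : ℕ) {t : Set (Fin n → S)}
    (ht : MeasurableSet t) {A : Set S} (hA : MeasurableSet A) :
    P ((fun ω (i : Fin n) => ω i) ⁻¹' t ∩ (fun ω => ω (n + d)) ⁻¹' A)
      = ∫⁻ x in t, predKernel κ d n x A ∂(P.map fun ω (i : Fin n) => ω i) := by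
  induction d generalizing n t with
  | zero =>
    have hlast : MeasurableSet {z : Fin (n + 1) → S | z (Fin.last n) ∈ A} :=
      measurable_pi_apply _ hA
    have hset : (fun (ω : ℕ → S) (i : Fin n) => ω i) ⁻¹' t ∩ (fun ω => ω (n + 0)) ⁻¹' A
        = (fun (ω : ℕ → S) (i : Fin (n + 1)) => ω i) ⁻¹'
          ({z | z (Fin.last n) ∈ A} ∩ Fin.init ⁻¹' t) := Set.inter_comm _ _
    rw [hset, ← Measure.map_apply (measurable_proj _) (hlast.inter (measurable_init n ht)),
      ← Measure.restrict_apply' (measurable_init n ht), ← lintegral_indicator_one hlast,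
      setLIntegral_init_preimage hP n ht (measurable_one.indicator hlast)]
    refine setLIntegral_congr_fun ht fun x _ => ?_
    rw [← lintegral_indicator_one hA]
    refine lintegral_congr fun y => ?_
    by_cases hy : y ∈ A <;> simp [hy]
  | succ d ih =>
    have hproj : (fun (ω : ℕ → S) (i : Fin n) => ω i) ⁻¹' t
        = (fun (ω : ℕ → S) (i : Fin (n + 1)) => ω i) ⁻¹' (Fin.init ⁻¹' t) := rfl
    rw [hproj, show n + (d + 1) = n + 1 + d by omega, ih (n + 1) (measurable_init n ht),
      setLIntegral_init_preimage hP n ht (Kernel.measurable_coe _ hA)]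
    exact setLIntegral_congr_fun ht fun x _ => (predKernel_succ_apply κ d n x hA).symm

lemma map_coord_apply (hP : IsStrategyLaw κ P) (d : ℕ) {A : Set S} (hA : MeasurableSet A) :
    P.map (fun ω => ω d) A = predKernel κ d 0 (fun i : Fin 0 => i.elim0) A := by
  have h := measure_proj_inter_coord hP d 0 MeasurableSet.univ hA
  rw [Set.preimage_univ, Set.univ_inter, Measure.restrict_univ, hP 0, stratFDD,
    lintegral_dirac' _ (Kernel.measurable_coe _ hA), zero_add] at h
  rwa [Measure.map_apply (measurable_pi_apply d) hA]

lemma map_coord_eq_iff (hP : IsStrategyLaw κ P) (d d' : ℕ) :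
    P.map (fun ω => ω d) = P.map (fun ω => ω d') ↔ ∀ A, MeasurableSet A →
      ∀ᵐ x ∂(P.map fun ω (i : Fin 0) => ω i), predKernel κ d 0 x A = predKernel κ d' 0 x A := by
  rw [Measure.ext_iff]
  refine forall₂_congr fun A hA => ?_
  rw [hP 0, stratFDD, ae_dirac_iff (measurableSet_eq_fun (Kernel.measurable_coe _ hA)
    (Kernel.measurable_coe _ hA)), map_coord_apply hP d hA, map_coord_apply hP d' hA]

lemma condExp_coord_ae_eq_predKernel [IsFiniteMeasure P] (hP : IsStrategyLaw κ P) (n d : ℕ)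
    {A : Set S} (hA : MeasurableSet A) :
    P[((fun ω => ω (n + d)) ⁻¹' A).indicator (fun _ => (1 : ℝ)) |
        MeasurableSpace.comap (fun ω (i : Fin n) => ω i) inferInstance]
      =ᵐ[P] fun ω => (predKernel κ d n (fun i => ω i) A).toReal :=
  condExp_indicator_preimage_ae_eq_kernel (measurable_proj n) (measurable_pi_apply _) _ hA
    fun _ ht => measure_proj_inter_coord hP d n ht hA

lemma condExp_coord_ae_eq_iff [IsFiniteMeasure P] (hP : IsStrategyLaw κ P) (n d d' : ℕ)
    {A : Set S} (hA : MeasurableSet A) :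
    P[((fun ω => ω (n + d)) ⁻¹' A).indicator (fun _ => (1 : ℝ)) |
        MeasurableSpace.comap (fun ω (i : Fin n) => ω i) inferInstance]
      =ᵐ[P] P[((fun ω => ω (n + d')) ⁻¹' A).indicator (fun _ => (1 : ℝ)) |
        MeasurableSpace.comap (fun ω (i : Fin n) => ω i) inferInstance] ↔
      ∀ᵐ x ∂(P.map fun ω (i : Fin n) => ω i), predKernel κ d n x A = predKernel κ d' n x A := by
  rw [(condExp_coord_ae_eq_predKernel hP n d hA).congr_left,
    (condExp_coord_ae_eq_predKernel hP n d' hA).congr_right, ae_map_iff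
      (measurable_proj n).aemeasurable (measurableSet_eq_fun (Kernel.measurable_coe _ hA)
      (Kernel.measurable_coe _ hA))]
  exact Filter.eventually_congr (.of_forall fun _ =>
    ENNReal.toReal_eq_toReal_iff' (measure_ne_top _ _) (measure_ne_top _ _))

lemma predKernel_ae_eq_of_step (hP : IsStrategyLaw κ P)
    (hstep : ∀ (n : ℕ) (A : Set S), MeasurableSet A →
      ∀ᵐ x ∂(P.map fun ω (i : Fin n) => ω i),
        κ n x A = ∫⁻ y, κ (n + 1) (Fin.snoc x y) A ∂(κ n x))
    (d n : ℕ) {A : Set S} (hA : MeasurableSet A) :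
    ∀ᵐ x ∂(P.map fun ω (i : Fin n) => ω i), predKernel κ d n x A = κ n x A := by
  induction d generalizing n with
  | zero => exact .of_forall fun _ => rfl
  | succ d ih =>
    filter_upwards [ae_ae_of_ae_map_proj_succ hP n (ih (n + 1)), hstep n A hA] with x hx hκ
    rw [predKernel_succ_apply κ d n x hA, lintegral_congr_ae hx, hκ]

end Strategy

theorem cid_iff_strategy_general {S : Type*} [MeasurableSpace S]
    (κ : ∀ n, Kernel (Fin n → S) S) [∀ n, IsMarkovKernel (κ n)]
    (P : Measure (ℕ → S)) [IsProbabilityMeasure P] (hP : IsStrategyLaw κ P) :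
    CID P (fun n ω => ω n) ↔
      ∀ (n : ℕ) (A : Set S), MeasurableSet A →
        ∀ᵐ x ∂(P.map (fun ω (i : Fin n) => ω i)),
          κ n x A = ∫⁻ y, κ (n + 1) (Fin.snoc x y) A ∂(κ n x) := by
  have step_iff : ∀ n {A : Set S}, MeasurableSet A → ∀ x : Fin n → S,
      (κ n x A = ∫⁻ y, κ (n + 1) (Fin.snoc x y) A ∂(κ n x)) ↔
        predKernel κ 1 n x A = predKernel κ 0 n x A := fun n A hA x => by
    rw [predKernel_succ_apply κ 0 n x hA, eq_comm]
    rfl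
  refine ⟨fun ⟨h10, hcond⟩ n A hA => ?_, fun h => ⟨?_, fun n m _ hnm A hA => ?_⟩⟩
  · simp_rw [step_iff n hA]
    cases n with
    | zero => exact (map_coord_eq_iff hP 1 0).1 h10 A hA
    | succ n => exact (condExp_coord_ae_eq_iff hP (n + 1) 1 0 hA).1 (hcond _ _ le_add_self
        (Nat.le_succ _) A hA)
  · exact (map_coord_eq_iff hP 1 0).2 fun A hA => predKernel_ae_eq_of_step hP h 1 0 hA
  · obtain ⟨d, rfl⟩ := Nat.exists_eq_add_of_le hnm
    exact (condExp_coord_ae_eq_iff hP n d 0 hA).2 (predKernel_ae_eq_of_step hP h d n hA)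

/-- **Theorem (characterization of c.i.d. laws in terms of strategies).**
Let `κ` be a strategy. The coordinate process is c.i.d. under `P_κ` if and only if,
for every `n ≥ 0` and every measurable `A`, one has
`κ_n(x, A) = ∫ κ_{n+1}((x, y), A) κ_n(x, dy)` for `P_κ`-almost all `x ∈ Sⁿ`. -/
theorem cid_iff_strategy {S : Type*} [MeasurableSpace S] [StandardBorelSpace S] [Nonempty S]
    (κ : ∀ n, Kernel (Fin n → S) S) [∀ n, IsMarkovKernel (κ n)]
    (P : Measure (ℕ → S)) [IsProbabilityMeasure P] (hP : IsStrategyLaw κ P) :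
    CID P (fun n ω => ω n) ↔
      ∀ (n : ℕ) (A : Set S), MeasurableSet A →
        ∀ᵐ x ∂(P.map (fun ω (i : Fin n) => ω i)),
          κ n x A = ∫⁻ y, κ (n + 1) (Fin.snoc x y) A ∂(κ n x) :=
  cid_iff_strategy_general κ P hP

end PredictiveBayes
end

section
/- Let λ be a σ-finite measure on (S, B) and σ a strategy dominated by λ with densities f_n, and let g_n(x) = f_0(x_1) f_1(x_2 | x_1) ··· f_{n−1}(x_n | x_1, ..., x_{n−1}). Then P_σ is stationary if and only if, for every n ≥ 1, g_n(x) = ∫_S g_{n+1}(u, x) λ(du) for P_σ∘(X_1, ..., X_n)^{−1}-almost all x ∈ S^n, where (u, x) = (u, x_1, ..., x_n). -/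
/-! The law of `(X_1, …, X_n)` under `P_σ` has density `g_n` with respect to `λⁿ` (induction on `n`,
each step multiplying by the predictive density `f_n`), and integrating out the first coordinate
shows that the law of `(X_2, …, X_{n+1})` has density `x ↦ ∫ g_{n+1}(u, x) λ(du)`. Stationarity is
the equality of these two laws for every `n`, i.e. `λⁿ`-a.e. equality of the two densities. As both
are probability densities, `g_n ≤ ∫ g_{n+1}(u, ·) λ(du)` a.e. already forces equality, and this
inequality is automatic where `g_n = 0`; so `λⁿ`-a.e. equality is the same as equality a.e. on
`{g_n > 0}`, that is, `P_σ ∘ (X_1, …, X_n)⁻¹`-a.e. -/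

open MeasureTheory ProbabilityTheory
open scoped ENNReal

namespace PredictiveBayes

variable {S : Type*} [MeasurableSpace S]

/-- The process `Y` is stationary under `P`. -/
def Stationary {Ω : Type*} [MeasurableSpace Ω] (P : Measure Ω) (Y : ℕ → Ω → S) : Prop :=
  ∀ n : ℕ, P.map (fun ω (i : Fin n) => Y ((i : ℕ) + 1) ω)
    = P.map (fun ω (i : Fin n) => Y i ω)

/-- Given predictive densities `f`, `jointDensity f n` is the function
`g_n(x) = f_0(x_1) f_1(x_2 | x_1) ⋯ f_{n-1}(x_n | x_1, …, x_{n-1})`. -/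
noncomputable def jointDensity (f : ∀ n, (Fin n → S) → S → ℝ≥0∞) : ∀ n, (Fin n → S) → ℝ≥0∞
  | 0 => fun _ => 1
  | n + 1 => fun x => jointDensity f n (Fin.init x) * f n (Fin.init x) (x (Fin.last n))

section WithDensity

variable {α β γ : Type*} [MeasurableSpace α] [MeasurableSpace β] [MeasurableSpace γ]

lemma _root_.MeasureTheory.MeasurePreserving.map_withDensity_comp {μ : Measure α}
    {ν : Measure β} {e : α → β} (he : MeasurePreserving e μ ν) {F : β → ℝ≥0∞}
    (hF : Measurable F) :
    (μ.withDensity (F ∘ e)).map e = ν.withDensity F := by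
  ext s hs
  rw [Measure.map_apply he.measurable hs, withDensity_apply _ (he.measurable hs),
    withDensity_apply _ hs, ← lintegral_indicator (he.measurable hs), ← lintegral_indicator hs,
    ← he.lintegral_comp (hF.indicator hs)]
  exact lintegral_congr fun x => Set.indicator_comp_right e

lemma _root_.MeasureTheory.Measure.map_snd_prod_withDensity (μ : Measure α) (ν : Measure β)
    [SFinite μ] [SFinite ν] {F : α × β → ℝ≥0∞} (hF : Measurable F) :
    ((μ.prod ν).withDensity F).map Prod.snd = ν.withDensity (fun y => ∫⁻ x, F (x, y) ∂μ) := by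
  ext s hs
  rw [Measure.map_apply measurable_snd hs, withDensity_apply _ (measurable_snd hs),
    withDensity_apply _ hs, ← Set.univ_prod, ← Measure.prod_restrict, Measure.restrict_univ,
    lintegral_prod_symm _ hF.aemeasurable]

lemma _root_.MeasureTheory.Measure.withDensity_bind_map_withDensity (μ : Measure α)
    (ν : Measure β) [SFinite ν] {g : α → ℝ≥0∞} (hg : Measurable g) {f : α → β → ℝ≥0∞}
    (hf : Measurable (fun p : α × β => f p.1 p.2)) {φ : α × β → γ} (hφ : Measurable φ) :
    (μ.withDensity g).bind (fun x => (ν.withDensity (f x)).map (fun y => φ (x, y)))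
      = ((μ.prod ν).withDensity (fun p => g p.1 * f p.1 p.2)).map φ := by
  have hsection : ∀ x {s}, MeasurableSet s →
      (ν.withDensity (f x)).map (fun y => φ (x, y)) s
        = ∫⁻ y, (φ ⁻¹' s).indicator (fun p => f p.1 p.2) (x, y) ∂ν := by
    intro x s hs
    have hφx : Measurable fun y => φ (x, y) := hφ.comp measurable_prodMk_left
    rw [Measure.map_apply hφx hs, withDensity_apply _ (hφx hs), ← lintegral_indicator (hφx hs)]
    rfl
  have hkernel : Measurable fun x => (ν.withDensity (f x)).map (fun y => φ (x, y)) :=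
    Measure.measurable_of_measurable_coe _ fun s hs => by
      simp_rw [hsection _ hs]
      exact (hf.indicator (hφ hs)).lintegral_prod_right'
  have hdensity : Measurable fun p : α × β => g p.1 * f p.1 p.2 := (hg.comp measurable_fst).mul hf
  ext s hs
  have hkernel_s : Measurable fun x => (ν.withDensity (f x)).map (fun y => φ (x, y)) s :=
    (Measure.measurable_coe hs).comp hkernel
  rw [Measure.bind_apply hs hkernel.aemeasurable,
    lintegral_withDensity_eq_lintegral_mul _ hg hkernel_s,
    Measure.map_apply hφ hs, withDensity_apply _ (hφ hs), ← lintegral_indicator (hφ hs),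
    lintegral_prod _ (hdensity.indicator (hφ hs)).aemeasurable]
  refine lintegral_congr fun x => ?_
  have hsection_meas : Measurable fun y => (φ ⁻¹' s).indicator (fun p => f p.1 p.2) (x, y) :=
    (hf.indicator (hφ hs)).comp measurable_prodMk_left
  rw [Pi.mul_apply, hsection x hs, ← lintegral_const_mul _ hsection_meas]
  exact lintegral_congr fun y => by rw [Set.indicator_mul_right]

lemma _root_.MeasureTheory.withDensity_eq_withDensity_iff_ae_eq {μ : Measure α}
    [SigmaFinite μ] {g h : α → ℝ≥0∞} (hg : AEMeasurable g μ) (hh : AEMeasurable h μ)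
    [IsFiniteMeasure (μ.withDensity g)]
    (hmass : μ.withDensity h Set.univ ≤ μ.withDensity g Set.univ) :
    μ.withDensity g = μ.withDensity h ↔ ∀ᵐ x ∂μ.withDensity g, g x = h x := by
  rw [withDensity_eq_iff_of_sigmaFinite hg hh]
  refine ⟨fun hgh => (withDensity_absolutelyContinuous μ g).ae_le hgh, fun hgh => ?_⟩
  have hle : g ≤ᵐ[μ] h := by
    filter_upwards [(ae_withDensity_iff' hg).mp hgh] with x hx
    by_cases hx0 : g x = 0
    · simp [hx0]
    · exact (hx hx0).le
  simp only [withDensity_apply _ MeasurableSet.univ, Measure.restrict_univ] at hmass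
  refine ae_eq_of_ae_le_of_lintegral_le hle ?_ hh hmass
  simpa [withDensity_apply _ MeasurableSet.univ] using measure_ne_top (μ.withDensity g) Set.univ

end WithDensity

lemma measurePreserving_snoc (lam : Measure S) [SigmaFinite lam] (n : ℕ) :
    MeasurePreserving (fun p : (Fin n → S) × S => (Fin.snoc p.1 p.2 : Fin (n + 1) → S))
      ((Measure.pi fun _ => lam).prod lam) (Measure.pi fun _ => lam) := by
  convert ((measurePreserving_piFinSuccAbove (fun _ : Fin (n + 1) => lam) (Fin.last n)).symm
    _).comp (Measure.measurePreserving_swap (μ := Measure.pi fun _ : Fin n => lam) (ν := lam))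
    using 1
  funext p
  exact (Fin.insertNth_last' p.2 p.1).symm

lemma measurePreserving_cons (lam : Measure S) [SigmaFinite lam] (n : ℕ) :
    MeasurePreserving (fun p : S × (Fin n → S) => (Fin.cons p.1 p.2 : Fin (n + 1) → S))
      (lam.prod (Measure.pi fun _ => lam)) (Measure.pi fun _ => lam) := by
  convert (measurePreserving_piFinSuccAbove (fun _ : Fin (n + 1) => lam) 0).symm _ using 1
  funext p
  exact (Fin.insertNth_zero' p.1 p.2).symm

lemma jointDensity_snoc {T : Type*} (f : ∀ n, (Fin n → T) → T → ℝ≥0∞) (n : ℕ) (x : Fin n → T)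
    (y : T) :
    jointDensity f (n + 1) (Fin.snoc x y) = jointDensity f n x * f n x y := by
  simp [jointDensity, Fin.init_snoc, Fin.snoc_last]

lemma measurable_jointDensity {f : ∀ n, (Fin n → S) → S → ℝ≥0∞}
    (hf : ∀ n, Measurable (fun p : (Fin n → S) × S => f n p.1 p.2)) :
    ∀ n, Measurable (jointDensity f n)
  | 0 => measurable_const
  | n + 1 => by
    have hinit : Measurable (fun x : Fin (n + 1) → S => Fin.init x) :=
      measurable_pi_lambda _ fun _ => measurable_pi_apply _
    exact ((measurable_jointDensity hf n).comp hinit).mul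
      ((hf n).comp (hinit.prodMk (measurable_pi_apply (Fin.last n))))

lemma stratFDD_eq_withDensity (lam : Measure S) [SigmaFinite lam]
    {f : ∀ n, (Fin n → S) → S → ℝ≥0∞}
    (hf : ∀ n, Measurable (fun p : (Fin n → S) × S => f n p.1 p.2))
    {κ : ∀ n, Kernel (Fin n → S) S} (hκ : ∀ n (x : Fin n → S), κ n x = lam.withDensity (f n x)) :
    ∀ n, stratFDD κ n = (Measure.pi fun _ => lam).withDensity (jointDensity f n)
  | 0 => by
    rw [show jointDensity f 0 = 1 from rfl, withDensity_one, Measure.pi_of_empty]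
    rfl
  | n + 1 => by
    have hsnoc := measurePreserving_snoc lam n
    simp only [stratFDD, stratFDD_eq_withDensity lam hf hκ n, hκ n]
    rw [Measure.withDensity_bind_map_withDensity _ _ (measurable_jointDensity hf n) (hf n)
      hsnoc.measurable]
    have hdensity : (fun p : (Fin n → S) × S => jointDensity f n p.1 * f n p.1 p.2)
        = jointDensity f (n + 1) ∘ fun p => Fin.snoc p.1 p.2 :=
      funext fun p => (jointDensity_snoc f n p.1 p.2).symm
    rw [hdensity]
    exact hsnoc.map_withDensity_comp (measurable_jointDensity hf (n + 1))

lemma map_tail_withDensity (lam : Measure S) [SigmaFinite lam] (n : ℕ)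
    {g : (Fin (n + 1) → S) → ℝ≥0∞} (hg : Measurable g) :
    ((Measure.pi fun _ => lam).withDensity g).map (fun x (i : Fin n) => x i.succ)
      = (Measure.pi fun _ => lam).withDensity (fun x => ∫⁻ u, g (Fin.cons u x) ∂lam) := by
  have hcons := measurePreserving_cons lam n
  rw [← hcons.map_withDensity_comp hg,
    Measure.map_map (measurable_pi_lambda _ fun _ => measurable_pi_apply _) hcons.measurable]
  exact Measure.map_snd_prod_withDensity _ _ (hg.comp hcons.measurable)

lemma map_shift_eq_map_iff_ae_jointDensity_eq (lam : Measure S) [SigmaFinite lam]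
    {f : ∀ n, (Fin n → S) → S → ℝ≥0∞}
    (hf : ∀ n, Measurable (fun p : (Fin n → S) × S => f n p.1 p.2))
    {κ : ∀ n, Kernel (Fin n → S) S} (hκ : ∀ n (x : Fin n → S), κ n x = lam.withDensity (f n x))
    {P : Measure (ℕ → S)} [IsProbabilityMeasure P] (hP : IsStrategyLaw κ P) (n : ℕ) :
    P.map (fun ω (i : Fin n) => ω ((i : ℕ) + 1)) = P.map (fun ω (i : Fin n) => ω i) ↔
      ∀ᵐ x ∂(P.map (fun ω (i : Fin n) => ω i)),
        jointDensity f n x = ∫⁻ u, jointDensity f (n + 1) (Fin.cons u x) ∂lam := by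
  have hblock_meas : ∀ m, Measurable fun ω : ℕ → S => fun i : Fin m => ω i :=
    fun m => measurable_pi_lambda _ fun _ => measurable_pi_apply _
  have hblock : P.map (fun ω (i : Fin n) => ω i)
      = (Measure.pi fun _ => lam).withDensity (jointDensity f n) :=
    (hP n).trans (stratFDD_eq_withDensity lam hf hκ n)
  have hshift : P.map (fun ω (i : Fin n) => ω ((i : ℕ) + 1))
      = (Measure.pi fun _ => lam).withDensity
          (fun x => ∫⁻ u, jointDensity f (n + 1) (Fin.cons u x) ∂lam) := by
    rw [← map_tail_withDensity lam n (measurable_jointDensity hf (n + 1)),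
      ← stratFDD_eq_withDensity lam hf hκ, ← hP, Measure.map_map
        (measurable_pi_lambda _ fun _ => measurable_pi_apply _) (hblock_meas (n + 1))]
    rfl
  have hmarginal :
      Measurable fun x : Fin n → S => ∫⁻ u, jointDensity f (n + 1) (Fin.cons u x) ∂lam :=
    ((measurable_jointDensity hf (n + 1)).comp
      (measurePreserving_cons lam n).measurable).lintegral_prod_left'
  have : IsProbabilityMeasure ((Measure.pi fun _ => lam).withDensity (jointDensity f n)) :=
    hblock ▸ Measure.isProbabilityMeasure_map (hblock_meas n).aemeasurable
  have : IsProbabilityMeasure ((Measure.pi fun _ => lam).withDensity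
      (fun x => ∫⁻ u, jointDensity f (n + 1) (Fin.cons u x) ∂lam)) :=
    hshift ▸ Measure.isProbabilityMeasure_map
      (measurable_pi_lambda _ fun _ => measurable_pi_apply _).aemeasurable
  rw [hshift, hblock, eq_comm]
  exact withDensity_eq_withDensity_iff_ae_eq (measurable_jointDensity hf n).aemeasurable
    hmarginal.aemeasurable (by simp)

theorem dominated_stationary_iff_general {S : Type*} [MeasurableSpace S]
    (lam : Measure S) [SigmaFinite lam]
    (f : ∀ n, (Fin n → S) → S → ℝ≥0∞)
    (hf : ∀ n, Measurable (fun p : (Fin n → S) × S => f n p.1 p.2))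
    (κ : ∀ n, Kernel (Fin n → S) S)
    (hκ : ∀ n (x : Fin n → S), κ n x = lam.withDensity (f n x))
    (P : Measure (ℕ → S)) [IsProbabilityMeasure P] (hP : IsStrategyLaw κ P) :
    Stationary P (fun n ω => ω n) ↔
      ∀ n : ℕ, 1 ≤ n →
        ∀ᵐ x ∂(P.map (fun ω (i : Fin n) => ω i)),
          jointDensity f n x = ∫⁻ u, jointDensity f (n + 1) (Fin.cons u x) ∂lam := by
  have hlevel := map_shift_eq_map_iff_ae_jointDensity_eq lam hf hκ hP
  refine ⟨fun hstat n _ => (hlevel n).mp (hstat n), fun hdens n => ?_⟩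
  rcases n with _ | n
  · exact congrArg (P.map ·) (funext fun _ => funext fun i => i.elim0)
  · exact (hlevel (n + 1)).mpr (hdens (n + 1) n.succ_pos)

/-- **Theorem (stationarity for dominated strategies).** Let `λ` be a σ-finite measure
and `κ` a strategy dominated by `λ`, with predictive densities `f_n(· | x)` and joint
densities `g_n`. Then `P_κ` is stationary if and only if, for every `n ≥ 1`,
`g_n(x) = ∫ g_{n+1}(u, x) λ(du)` for `P_κ ∘ (X_1, …, X_n)⁻¹`-almost all `x ∈ Sⁿ`. -/
theorem dominated_stationary_iff {S : Type*} [MeasurableSpace S] [StandardBorelSpace S]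
    [Nonempty S]
    (lam : Measure S) [SigmaFinite lam]
    (f : ∀ n, (Fin n → S) → S → ℝ≥0∞)
    (hf : ∀ n, Measurable (fun p : (Fin n → S) × S => f n p.1 p.2))
    (κ : ∀ n, Kernel (Fin n → S) S) [∀ n, IsMarkovKernel (κ n)]
    (hκ : ∀ n (x : Fin n → S), κ n x = lam.withDensity (f n x))
    (P : Measure (ℕ → S)) [IsProbabilityMeasure P] (hP : IsStrategyLaw κ P) :
    Stationary P (fun n ω => ω n) ↔
      ∀ n : ℕ, 1 ≤ n →
        ∀ᵐ x ∂(P.map (fun ω (i : Fin n) => ω i)),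
          jointDensity f n x = ∫⁻ u, jointDensity f (n + 1) (Fin.cons u x) ∂lam :=
  dominated_stationary_iff_general lam f hf κ hκ P hP

end PredictiveBayes
end

section
/- Let ν be a probability measure on (S, B). For each n ≥ 0, let H_n be a countable measurable partition of S with ν(H) > 0 for every H ∈ H_n, such that H_{n+1} is finer than H_n (every element of H_{n+1} is contained in some element of H_n); write H_y^n for the unique element of H_n containing y and ν(· | H_y^n) for the conditional probability A ↦ ν(A ∩ H_y^n)/ν(H_y^n). Let q_n : S^n → [0,1] be measurable (q_0 constant) and define the strategy σ by σ_0 = ν and σ_{n+1}(x, y) = q_n(x) σ_n(x) + (1 − q_n(x)) ν(· | H_y^n) for all n ≥ 0, x ∈ S^n, y ∈ S. Then the coordinate process X is conditionally identically distributed (c.i.d.) under P_σ. -/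
/-! The predictive measures satisfy `σ_n(x) = ∫ σ_{n+1}(x, y) σ_n(x)(dy)`, and for a strategy this
identity forces the law of `((X_1, …, X_n), X_{m+1})` to be the same for all `m ≥ n`, which is the
c.i.d. property. The identity holds because, by induction on `n` and since `𝓗_{n+1}` refines
`𝓗_n`, each `σ_n(x)` has the conditional law `ν(· | H)` on every cell `H ∈ 𝓗_n`; integrating
`ν(A | H_y^n)` in `y` against `σ_n(x)` then gives back `σ_n(x)(A)`. -/

open MeasureTheory ProbabilityTheory
open scoped ENNReal

namespace PredictiveBayes

variable {S : Type*} [MeasurableSpace S]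

@[fun_prop]
theorem _root_.Measurable.finSnoc {α : Type*} [MeasurableSpace α] {n : ℕ} {f : α → Fin n → S}
    {g : α → S} (hf : Measurable f) (hg : Measurable g) :
    Measurable fun a => (Fin.snoc (f a) (g a) : Fin (n + 1) → S) := by
  refine measurable_pi_lambda _ fun i => Fin.lastCases ?_ (fun j => ?_) i
  · simpa using hg
  · simp only [Fin.snoc_castSucc]
    exact (measurable_pi_apply j).comp hf

@[fun_prop]
theorem _root_.Measurable.finTake {α : Type*} [MeasurableSpace α] {n m : ℕ} (h : m ≤ n)
    {f : α → Fin n → S} (hf : Measurable f) :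
    Measurable fun a => (Fin.take m h (f a) : Fin m → S) :=
  measurable_pi_lambda _ fun _ => (measurable_pi_apply _).comp hf

theorem _root_.Fin.take_snoc {α : Type*} {n m : ℕ} (h : m ≤ n) (x : Fin n → α) (y : α) :
    Fin.take m (h.trans n.le_succ) (Fin.snoc x y : Fin (n + 1) → α) = Fin.take m h x := by
  rw [← Fin.take_init, Fin.init_snoc]

section GiryMonad

variable {α β γ : Type*} [MeasurableSpace α] [MeasurableSpace β] [MeasurableSpace γ]

theorem _root_.MeasureTheory.Measure.map_bind {μ : Measure α} {f : α → Measure β} {g : β → γ}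
    (hf : Measurable f) (hg : Measurable g) :
    (μ.bind f).map g = μ.bind fun a => (f a).map g := by
  have hfg : Measurable fun a => (f a).map g := (Measure.measurable_map g hg).comp hf
  ext s hs
  rw [Measure.map_apply hg hs, Measure.bind_apply (hg hs) hf.aemeasurable,
    Measure.bind_apply hs hfg.aemeasurable]
  simp_rw [Measure.map_apply hg hs]

theorem _root_.MeasureTheory.Measure.bind_map {μ : Measure α} {f : α → β} {g : β → Measure γ}
    (hf : Measurable f) (hg : Measurable g) : (μ.map f).bind g = μ.bind (g ∘ f) := by
  ext s hs
  rw [Measure.bind_apply hs hg.aemeasurable,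
    lintegral_map (f := fun b => g b s) ((Measure.measurable_coe hs).comp hg) hf,
    Measure.bind_apply hs (hg.comp hf).aemeasurable]
  rfl

theorem _root_.ProbabilityTheory.Kernel.measurable_map_of_uncurry (κ : Kernel α β)
    [IsSFiniteKernel κ] {g : α → β → γ} (hg : Measurable (Function.uncurry g)) :
    Measurable fun a => (κ a).map (g a) := by
  refine Measure.measurable_of_measurable_coe _ fun s hs => ?_
  simp_rw [Measure.map_apply hg.of_uncurry_left hs]
  exact Kernel.measurable_kernel_prodMk_left (hg hs)

end GiryMonad

theorem _root_.MeasureTheory.condExp_indicator_ae_eq_of_map_prod_eq {Ω β γ : Type*}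
    [MeasurableSpace Ω] [mβ : MeasurableSpace β] [MeasurableSpace γ] {P : Measure Ω}
    [IsFiniteMeasure P] {X : Ω → β} {Y Y' : Ω → γ} (hX : Measurable X) (hY : Measurable Y)
    (hY' : Measurable Y') (hlaw : P.map (fun ω => (X ω, Y ω)) = P.map (fun ω => (X ω, Y' ω)))
    {A : Set γ} (hA : MeasurableSet A) :
    P[(Y ⁻¹' A).indicator (fun _ => (1 : ℝ)) | mβ.comap X]
      =ᵐ[P] P[(Y' ⁻¹' A).indicator (fun _ => (1 : ℝ)) | mβ.comap X] := by
  have hint : ∀ {Z : Ω → γ}, Measurable Z → Integrable ((Z ⁻¹' A).indicator fun _ => (1 : ℝ)) P :=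
    fun hZ => (integrable_const 1).indicator (hZ hA)
  have hsetIntegral : ∀ {Z : Ω → γ}, Measurable Z → ∀ {B : Set β}, MeasurableSet B →
      ∫ ω in X ⁻¹' B, (Z ⁻¹' A).indicator (fun _ => (1 : ℝ)) ω ∂P
        = (P.map fun ω => (X ω, Z ω)).real (B ×ˢ A) := fun hZ B hB => by
    rw [integral_indicator_const _ (hZ hA), smul_eq_mul, mul_one, measureReal_def, measureReal_def,
      Measure.restrict_apply (hZ hA), Measure.map_apply (hX.prodMk hZ) (hB.prod hA),
      Set.mk_preimage_prod, Set.inter_comm]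
  refine (ae_eq_condExp_of_forall_setIntegral_eq hX.comap_le (hint hY)
    (fun _ _ _ => integrable_condExp.integrableOn) (fun s hs _ => ?_)
    stronglyMeasurable_condExp.aestronglyMeasurable).symm
  obtain ⟨B, hB, rfl⟩ := hs
  rw [setIntegral_condExp hX.comap_le (hint hY') ⟨B, hB, rfl⟩, hsetIntegral hY hB,
    hsetIntegral hY' hB, hlaw]

section Strategy

variable (κ : ∀ n, Kernel (Fin n → S) S)

/-- The law of `((X_1, …, X_n), X_{m+1})` under `P_κ`, written through the last step. -/
noncomputable def prefixCoordLaw {n m : ℕ} (h : n ≤ m) : Measure ((Fin n → S) × S) :=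
  (stratFDD κ m).bind fun x => (κ m x).map fun y => (Fin.take n h x, y)

variable [∀ n, IsSFiniteKernel (κ n)]

theorem measurable_map_snoc (m : ℕ) :
    Measurable fun x : Fin m → S => (κ m x).map (Fin.snoc (α := fun _ => S) x) :=
  (κ m).measurable_map_of_uncurry (by fun_prop)

theorem measurable_map_take_prod {n m : ℕ} (h : n ≤ m) :
    Measurable fun x : Fin m → S => (κ m x).map fun y => (Fin.take n h x, y) :=
  (κ m).measurable_map_of_uncurry (by fun_prop)

theorem map_stratFDD_take_last {n m : ℕ} (h : n ≤ m) :
    (stratFDD κ (m + 1)).map (fun x => (Fin.take n (h.trans m.le_succ) x, x (Fin.last m)))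
      = prefixCoordLaw κ h := by
  rw [stratFDD, Measure.map_bind (measurable_map_snoc κ m) (by fun_prop), prefixCoordLaw]
  congr 1
  funext x
  rw [Measure.map_map (by fun_prop) (by fun_prop)]
  congr 1
  funext y
  simp [Fin.take_snoc h]

theorem prefixCoordLaw_succ
    (hκ : ∀ m (x : Fin m → S), (κ m x).bind (fun y => κ (m + 1) (Fin.snoc x y)) = κ m x)
    {n m : ℕ} (h : n ≤ m) : prefixCoordLaw κ (h.trans m.le_succ) = prefixCoordLaw κ h := by
  rw [prefixCoordLaw, stratFDD, Measure.bind_bind (measurable_map_snoc κ m).aemeasurable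
    (measurable_map_take_prod κ _).aemeasurable, prefixCoordLaw]
  congr 1
  funext x
  have htake : (fun x' => (κ (m + 1) x').map fun z => (Fin.take n (h.trans m.le_succ) x', z))
      ∘ Fin.snoc x = fun y => (κ (m + 1) (Fin.snoc x y)).map fun z => (Fin.take n h x, z) := by
    funext y
    simp only [Function.comp_apply, Fin.take_snoc h]
  rw [Measure.bind_map (by fun_prop) (measurable_map_take_prod κ _), htake,
    ← Measure.map_bind (f := fun y => κ (m + 1) (Fin.snoc x y)) (by fun_prop) (by fun_prop), hκ]

theorem prefixCoordLaw_eq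
    (hκ : ∀ m (x : Fin m → S), (κ m x).bind (fun y => κ (m + 1) (Fin.snoc x y)) = κ m x)
    {n m : ℕ} (h : n ≤ m) : prefixCoordLaw κ h = prefixCoordLaw κ le_rfl := by
  induction m, h using Nat.le_induction with
  | base => rfl
  | succ m h ih => rw [prefixCoordLaw_succ κ hκ h, ih]

variable {κ} in
theorem IsStrategyLaw.map_prefix_coord {P : Measure (ℕ → S)} (hP : IsStrategyLaw κ P)
    {n m : ℕ} (h : n ≤ m) :
    P.map (fun ω => (fun i : Fin n => ω i, ω m)) = prefixCoordLaw κ h := by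
  rw [← map_stratFDD_take_last κ h, ← hP, Measure.map_map (by fun_prop) (by fun_prop)]
  rfl

variable {κ} in
theorem IsStrategyLaw.cid {P : Measure (ℕ → S)} [IsFiniteMeasure P] (hP : IsStrategyLaw κ P)
    (hκ : ∀ m (x : Fin m → S), (κ m x).bind (fun y => κ (m + 1) (Fin.snoc x y)) = κ m x) :
    CID P (fun n ω => ω n) := by
  have hjoint : ∀ {n m : ℕ}, n ≤ m → P.map (fun ω => (fun i : Fin n => ω i, ω m))
      = P.map (fun ω => (fun i : Fin n => ω i, ω n)) := fun h => by
    rw [hP.map_prefix_coord h, hP.map_prefix_coord le_rfl, prefixCoordLaw_eq κ hκ h]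
  refine ⟨?_, fun n m _ hnm A hA => condExp_indicator_ae_eq_of_map_prod_eq (by fun_prop)
    (by fun_prop) (by fun_prop) (hjoint hnm) hA⟩
  have h01 := congrArg (Measure.map Prod.snd) (hjoint zero_le_one)
  rwa [Measure.map_map measurable_snd (by fun_prop),
    Measure.map_map measurable_snd (by fun_prop)] at h01

end Strategy

theorem _root_.ProbabilityTheory.measure_smul_cond (μ : Measure S) [IsFiniteMeasure μ] (s : Set S) :
    μ s • μ[|s] = μ.restrict s := by
  rcases eq_or_ne (μ s) 0 with hs | hs
  · rw [hs, zero_smul, eq_comm, Measure.restrict_eq_zero, hs]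
  · rw [ProbabilityTheory.cond, smul_smul, ENNReal.mul_inv_cancel hs (measure_ne_top μ s), one_smul]

theorem _root_.ProbabilityTheory.restrict_cond_of_subset (μ : Measure S) [IsFiniteMeasure μ]
    {s t : Set S} (hs : MeasurableSet s) (ht : MeasurableSet t) (hts : t ⊆ s) :
    μ[|s].restrict t = μ[t | s] • μ[|t] := by
  rw [← measure_smul_cond, cond_cond_eq_cond_inter hs ht, Set.inter_eq_right.mpr hts]

structure IsCountablePartition (𝓗 : Set (Set S)) : Prop where
  countable : 𝓗.Countable
  measurableSet : ∀ H ∈ 𝓗, MeasurableSet H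
  pairwiseDisjoint : 𝓗.PairwiseDisjoint id
  sUnion_eq : ⋃₀ 𝓗 = Set.univ

namespace IsCountablePartition

variable {𝓗 : Set (Set S)}

theorem sum_restrict (h𝓗 : IsCountablePartition 𝓗) (μ : Measure S) :
    Measure.sum (fun H : 𝓗 => μ.restrict H) = μ := by
  have : Countable 𝓗 := h𝓗.countable.to_subtype
  rw [← Measure.restrict_iUnion (s := fun H : 𝓗 => (H : Set S))
    (fun H H' hne => h𝓗.pairwiseDisjoint H.2 H'.2 (Subtype.coe_ne_coe.mpr hne))
    (fun H => h𝓗.measurableSet H H.2), ← Set.sUnion_eq_iUnion, h𝓗.sUnion_eq, Measure.restrict_univ]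

theorem subset_or_disjoint (h𝓗 : IsCountablePartition 𝓗) {H₀ H H' : Set S} (hH₀ : H₀ ∈ 𝓗)
    (hH : H ∈ 𝓗) (hH' : H' ⊆ H) : H' ⊆ H₀ ∨ Disjoint H' H₀ := by
  rcases eq_or_ne H H₀ with rfl | hne
  · exact Or.inl hH'
  · exact Or.inr ((h𝓗.pairwiseDisjoint hH hH₀ hne).mono_left hH')

end IsCountablePartition

/-- `μ[|H] = ν[|H]` on every cell `H` of `𝓗`, stated without dividing by `μ H`. -/
def CellwiseCond (ν : Measure S) (𝓗 : Set (Set S)) (μ : Measure S) : Prop :=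
  ∀ H ∈ 𝓗, μ.restrict H = μ H • ν[|H]

namespace CellwiseCond

variable {ν μ μ' : Measure S} {𝓗 𝓗' : Set (Set S)}

theorem self [IsFiniteMeasure ν] : CellwiseCond ν 𝓗 ν :=
  fun H _ => (measure_smul_cond ν H).symm

theorem add (hμ : CellwiseCond ν 𝓗 μ) (hμ' : CellwiseCond ν 𝓗 μ') :
    CellwiseCond ν 𝓗 (μ + μ') := fun H hH => by
  rw [Measure.restrict_add, hμ H hH, hμ' H hH, Measure.add_apply, add_smul]

theorem smul (hμ : CellwiseCond ν 𝓗 μ) (c : ℝ≥0∞) : CellwiseCond ν 𝓗 (c • μ) := fun H hH => by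
  rw [Measure.restrict_smul, hμ H hH, Measure.smul_apply, smul_eq_mul, smul_smul]

theorem cond [IsFiniteMeasure ν] {H₀ : Set S} (hH₀ : MeasurableSet H₀)
    (h𝓗 : ∀ H ∈ 𝓗, MeasurableSet H) (hnest : ∀ H ∈ 𝓗, H ⊆ H₀ ∨ Disjoint H H₀) :
    CellwiseCond ν 𝓗 ν[|H₀] := fun H hH => by
  rcases hnest H hH with hsub | hdisj
  · exact restrict_cond_of_subset ν hH₀ (h𝓗 H hH) hsub
  · have hnull : ν[|H₀] H = 0 := by
      rw [cond_apply hH₀, Set.disjoint_iff_inter_eq_empty.mp hdisj.symm, measure_empty, mul_zero]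
    rw [hnull, zero_smul, Measure.restrict_eq_zero, hnull]

theorem of_refines [IsFiniteMeasure ν] (hμ : CellwiseCond ν 𝓗 μ)
    (h𝓗 : ∀ H ∈ 𝓗, MeasurableSet H) (h𝓗' : ∀ H' ∈ 𝓗', MeasurableSet H')
    (hfiner : ∀ H' ∈ 𝓗', ∃ H ∈ 𝓗, H' ⊆ H) : CellwiseCond ν 𝓗' μ := fun H' hH' => by
  obtain ⟨H, hH, hsub⟩ := hfiner H' hH'
  have hμH' : μ H' = μ H * ν[H' | H] := by
    rw [← Measure.restrict_eq_self μ hsub, hμ H hH, Measure.smul_apply, smul_eq_mul]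
  rw [← Measure.restrict_restrict_of_subset hsub, hμ H hH, Measure.restrict_smul,
    restrict_cond_of_subset ν (h𝓗 H hH) (h𝓗' H' hH') hsub, smul_smul, hμH']

theorem lintegral_cond_cell (hμ : CellwiseCond ν 𝓗 μ) (h𝓗 : IsCountablePartition 𝓗)
    {cell : S → Set S} (hcell : ∀ y, cell y ∈ 𝓗 ∧ y ∈ cell y) {A : Set S} (hA : MeasurableSet A) :
    ∫⁻ y, ν[A | cell y] ∂μ = μ A := by
  have hcell_eq : ∀ H ∈ 𝓗, ∀ y ∈ H, cell y = H := fun H hH y hy =>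
    h𝓗.pairwiseDisjoint.elim_set (hcell y).1 hH y (hcell y).2 hy
  calc ∫⁻ y, ν[A | cell y] ∂μ
      = ∑' H : 𝓗, ∫⁻ y in H, ν[A | cell y] ∂μ := by
        rw [← lintegral_sum_measure, h𝓗.sum_restrict]
    _ = ∑' H : 𝓗, ∫⁻ y in H, ν[A | H] ∂μ := tsum_congr fun H =>
        setLIntegral_congr_fun (h𝓗.measurableSet H H.2) fun y hy => by rw [hcell_eq H H.2 y hy]
    _ = ∑' H : 𝓗, μ.restrict H A := tsum_congr fun H => by
        rw [lintegral_const, Measure.restrict_apply_univ, hμ H H.2, Measure.smul_apply,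
          smul_eq_mul, mul_comm]
    _ = μ A := by rw [← Measure.sum_apply _ hA, h𝓗.sum_restrict]

end CellwiseCond

section PartitionStrategy

variable {ν : Measure S} {𝓗 : ℕ → Set (Set S)} {Hf : ℕ → S → Set S}
  {q : ∀ n, (Fin n → S) → ℝ} {κ : ∀ n, Kernel (Fin n → S) S}

theorem cellwiseCond_partitionStrategy [IsFiniteMeasure ν]
    (h𝓗 : ∀ n, IsCountablePartition (𝓗 n))
    (h𝓗finer : ∀ n, ∀ H ∈ 𝓗 (n + 1), ∃ H' ∈ 𝓗 n, H ⊆ H')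
    (hHf : ∀ n (y : S), Hf n y ∈ 𝓗 n ∧ y ∈ Hf n y)
    (hκ0 : ∀ x : Fin 0 → S, κ 0 x = ν)
    (hκ : ∀ n (w : Fin (n + 1) → S),
      κ (n + 1) w = ENNReal.ofReal (q n (Fin.init w)) • κ n (Fin.init w) +
        ENNReal.ofReal (1 - q n (Fin.init w)) • ν[|Hf n (w (Fin.last n))]) :
    ∀ n (x : Fin n → S), CellwiseCond ν (𝓗 n) (κ n x) := by
  intro n
  induction n with
  | zero =>
    intro x
    rw [hκ0 x]
    exact CellwiseCond.self
  | succ n ih =>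
    intro w
    have hnest : ∀ H ∈ 𝓗 (n + 1), H ⊆ Hf n (w (Fin.last n)) ∨ Disjoint H (Hf n (w (Fin.last n))) :=
      fun H hH => by
        obtain ⟨H', hH', hsub⟩ := h𝓗finer n H hH
        exact (h𝓗 n).subset_or_disjoint (hHf n _).1 hH' hsub
    rw [hκ n w]
    exact (((ih _).of_refines (h𝓗 n).measurableSet (h𝓗 (n + 1)).measurableSet
      (h𝓗finer n)).smul _).add
      ((CellwiseCond.cond ((h𝓗 n).measurableSet _ (hHf n _).1) (h𝓗 (n + 1)).measurableSet
        hnest).smul _)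

theorem partitionStrategy_bind_snoc [∀ n, IsMarkovKernel (κ n)]
    (h𝓗 : ∀ n, IsCountablePartition (𝓗 n))
    (hHf : ∀ n (y : S), Hf n y ∈ 𝓗 n ∧ y ∈ Hf n y)
    (hq01 : ∀ n x, q n x ∈ Set.Icc (0 : ℝ) 1)
    (hκ : ∀ n (w : Fin (n + 1) → S),
      κ (n + 1) w = ENNReal.ofReal (q n (Fin.init w)) • κ n (Fin.init w) +
        ENNReal.ofReal (1 - q n (Fin.init w)) • ν[|Hf n (w (Fin.last n))])
    {n : ℕ} (x : Fin n → S) (hx : CellwiseCond ν (𝓗 n) (κ n x)) :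
    (κ n x).bind (fun y => κ (n + 1) (Fin.snoc x y)) = κ n x := by
  ext A hA
  have hstep : ∀ y, κ (n + 1) (Fin.snoc x y) A
      = ENNReal.ofReal (q n x) * κ n x A + ENNReal.ofReal (1 - q n x) * ν[A | Hf n y] := by
    intro y
    simp [hκ n, Fin.init_snoc, Fin.snoc_last]
  rw [Measure.bind_apply hA (by fun_prop)]
  simp_rw [hstep]
  rw [lintegral_add_left measurable_const, lintegral_const, measure_univ, mul_one,
    lintegral_const_mul' _ _ ENNReal.ofReal_ne_top, hx.lintegral_cond_cell (h𝓗 n) (hHf n) hA,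
    ← add_mul, ← ENNReal.ofReal_add (hq01 n x).1 (sub_nonneg.2 (hq01 n x).2), add_sub_cancel,
    ENNReal.ofReal_one, one_mul]

end PartitionStrategy

theorem finerPartitions_cid_general {S : Type*} [MeasurableSpace S]
    (ν : Measure S) [IsProbabilityMeasure ν]
    (𝓗 : ℕ → Set (Set S)) (h𝓗count : ∀ n, (𝓗 n).Countable)
    (h𝓗meas : ∀ n, ∀ H ∈ 𝓗 n, MeasurableSet H)
    (h𝓗disj : ∀ n, (𝓗 n).PairwiseDisjoint id)
    (h𝓗cover : ∀ n, ⋃₀ (𝓗 n) = Set.univ)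
    (h𝓗finer : ∀ n, ∀ H ∈ 𝓗 (n + 1), ∃ H' ∈ 𝓗 n, H ⊆ H')
    (Hf : ℕ → S → Set S) (hHf : ∀ n (y : S), Hf n y ∈ 𝓗 n ∧ y ∈ Hf n y)
    (q : ∀ n, (Fin n → S) → ℝ)
    (hq01 : ∀ n x, q n x ∈ Set.Icc (0 : ℝ) 1)
    (κ : ∀ n, Kernel (Fin n → S) S) [∀ n, IsMarkovKernel (κ n)]
    (hκ0 : ∀ x : Fin 0 → S, κ 0 x = ν)
    (hκ : ∀ n (w : Fin (n + 1) → S),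
      κ (n + 1) w = ENNReal.ofReal (q n (Fin.init w)) • κ n (Fin.init w) +
        ENNReal.ofReal (1 - q n (Fin.init w)) • ν[|Hf n (w (Fin.last n))])
    (P : Measure (ℕ → S)) [IsProbabilityMeasure P] (hP : IsStrategyLaw κ P) :
    CID P (fun n ω => ω n) := by
  have h𝓗 : ∀ n, IsCountablePartition (𝓗 n) :=
    fun n => ⟨h𝓗count n, h𝓗meas n, h𝓗disj n, h𝓗cover n⟩
  have hcellwise := cellwiseCond_partitionStrategy h𝓗 h𝓗finer hHf hκ0 hκ
  exact hP.cid fun n x => partitionStrategy_bind_snoc h𝓗 hHf hq01 hκ x (hcellwise n x)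

/-- **Theorem (finer countable partitions give a c.i.d. strategy).** Let `ν` be a
probability measure and, for each `n`, let `𝓗 n` be a countable measurable partition
of `S`, with `ν`-positive elements, such that `𝓗 (n+1)` is finer than `𝓗 n`; `Hf n y`
denotes the element of `𝓗 n` containing `y`. Let `q_n : Sⁿ → [0,1]` be measurable and
let `κ` be the strategy defined recursively by `σ_0 = ν` and
`σ_{n+1}(x, y) = q_n(x) σ_n(x) + (1 - q_n(x)) ν(· | H_y^n)`. Then the coordinate
process is c.i.d. under `P_κ`. -/
theorem finerPartitions_cid {S : Type*} [MeasurableSpace S] [StandardBorelSpace S] [Nonempty S]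
    (ν : Measure S) [IsProbabilityMeasure ν]
    (𝓗 : ℕ → Set (Set S)) (h𝓗count : ∀ n, (𝓗 n).Countable)
    (h𝓗meas : ∀ n, ∀ H ∈ 𝓗 n, MeasurableSet H)
    (h𝓗pos : ∀ n, ∀ H ∈ 𝓗 n, 0 < ν H)
    (h𝓗disj : ∀ n, (𝓗 n).PairwiseDisjoint id)
    (h𝓗cover : ∀ n, ⋃₀ (𝓗 n) = Set.univ)
    (h𝓗finer : ∀ n, ∀ H ∈ 𝓗 (n + 1), ∃ H' ∈ 𝓗 n, H ⊆ H')
    (Hf : ℕ → S → Set S) (hHf : ∀ n (y : S), Hf n y ∈ 𝓗 n ∧ y ∈ Hf n y)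
    (q : ∀ n, (Fin n → S) → ℝ) (hqmeas : ∀ n, Measurable (q n))
    (hq01 : ∀ n x, q n x ∈ Set.Icc (0 : ℝ) 1)
    (κ : ∀ n, Kernel (Fin n → S) S) [∀ n, IsMarkovKernel (κ n)]
    (hκ0 : ∀ x : Fin 0 → S, κ 0 x = ν)
    (hκ : ∀ n (w : Fin (n + 1) → S),
      κ (n + 1) w = ENNReal.ofReal (q n (Fin.init w)) • κ n (Fin.init w) +
        ENNReal.ofReal (1 - q n (Fin.init w)) • ν[|Hf n (w (Fin.last n))])
    (P : Measure (ℕ → S)) [IsProbabilityMeasure P] (hP : IsStrategyLaw κ P) :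
    CID P (fun n ω => ω n) :=
  finerPartitions_cid_general ν 𝓗 h𝓗count h𝓗meas h𝓗disj h𝓗cover h𝓗finer Hf hHf q hq01 κ hκ0 hκ P hP

end PredictiveBayes
end
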